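/- arXiv:1709.02465 — 2 statements merged into one kernel-verified Lean document; each statement's English description precedes it below -/
import Mathlib

section
/- If (G, D, u) is a left Hadamard group then (G^op, D, u) is a left Hadamard group, where G^op is the opposite group of G. -/
/-- `(G, D, u)` is a left Hadamard group of order `8n`: `G` is a finite group of order
`8n`, `u` is a central involution, and `D` is a `4n`-subset with `|aD ∩ D| = 2n` for
`a ∉ ⟨u⟩ = {1, u}` and `|aD ∩ {b, bu}| = 1` for all `a, b ∈ G`. -/
def IsLeftHadamardGroup {G : Type*} [Group G] [Fintype G] [DecidableEq G]
    (n : ℕ) (D : Finset G) (u : G) : Prop :=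
  Fintype.card G = 8 * n ∧ u ≠ 1 ∧ u * u = 1 ∧ (∀ g : G, g * u = u * g) ∧
  D.card = 4 * n ∧
  (∀ a : G, a ≠ 1 → a ≠ u → ((D.image (fun d => a * d)) ∩ D).card = 2 * n) ∧
  (∀ a b : G, ((D.image (fun d => a * d)) ∩ ({b, b * u} : Finset G)).card = 1)

instance {G : Type*} [Fintype G] : Fintype Gᵐᵒᵖ :=
  Fintype.ofEquiv G MulOpposite.opEquiv

instance {G : Type*} [DecidableEq G] : DecidableEq Gᵐᵒᵖ :=
  fun a b => decidable_of_iff (a.unop = b.unop) MulOpposite.unop_injective.eq_iff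

/-
Encode `D` by its `±1`-valued indicator `χ` and form the matrix `M x y = χ (x * y)`. Since
`χ (x * u) = - χ x`, the left difference condition says `M Mᵀ = 16 n E`, where `E` is the
orthogonal projection onto the `u`-odd functions, and the right difference condition (which is
the left one in `Gᵐᵒᵖ`) says `Mᵀ M = 16 n E`. The latter follows from the former exactly as
`A Aᵀ = c I` implies `Aᵀ A = c I` for square matrices: `M + (1 - E)` is invertible. The pair
condition only says `x ∈ D ↔ x * u ∉ D`, which is symmetric in the two sides.
-/

open Finset Matrix

theorem Matrix.transpose_mul_self_eq_of_mul_transpose_self_eq {ι K : Type*} [Fintype ι]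
    [DecidableEq ι] [Field K] {M E : Matrix ι ι K} {c : K} (hc : c ≠ 0) (hEE : E * E = E)
    (hEt : Eᵀ = E) (hME : M * E = M) (hEM : E * M = M) (hM : M * Mᵀ = c • E) :
    Mᵀ * M = c • E := by
  have hEMt : E * Mᵀ = Mᵀ := by rw [← hEt, ← transpose_mul, hME]
  have hMtE : Mᵀ * E = Mᵀ := by rw [← hEt, ← transpose_mul, hEM]
  -- `N Nᵀ = c E + (1 - E)` has inverse `c⁻¹ E + (1 - E)`, so `N` is invertible.
  set N := M + (1 - E)
  have hNNt : N * Nᵀ = c • E + (1 - E) := by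
    simp only [N, transpose_add, transpose_sub, transpose_one, hEt, add_mul, mul_add, mul_sub,
      sub_mul, hM, hME, hEMt, hEE, mul_one, one_mul]
    abel
  have hinv : N * (Nᵀ * (c⁻¹ • E + (1 - E))) = 1 := by
    rw [← Matrix.mul_assoc, hNNt]
    simp only [add_mul, mul_add, mul_sub, sub_mul, smul_mul_assoc, mul_smul_comm, hEE, mul_one,
      one_mul, sub_self, add_zero, inv_smul_smul₀ hc]
    abel
  have hKN : (c⁻¹ • E + (1 - E)) * N = c⁻¹ • M + (1 - E) := by
    simp only [N, add_mul, mul_add, mul_sub, sub_mul, smul_mul_assoc, hEM, hEE, mul_one, one_mul]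
    abel
  have hNtN := mul_eq_one_comm.mp hinv
  rw [Matrix.mul_assoc, hKN] at hNtN
  simp only [N, transpose_add, transpose_sub, transpose_one, hEt, add_mul, mul_add, mul_sub,
    sub_mul, mul_smul_comm, hEM, hMtE, hEE, mul_one, one_mul, sub_self, add_zero] at hNtN
  have : c⁻¹ • (Mᵀ * M) = E := by
    rw [← sub_eq_zero, ← sub_eq_zero.mpr hNtN]; abel
  rw [← this, smul_smul, mul_inv_cancel₀ hc, one_smul]

def signIndicator {α : Type*} [DecidableEq α] (D : Finset α) (x : α) : ℚ :=
  if x ∈ D then 1 else -1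

theorem signIndicator_mul_self {α : Type*} [DecidableEq α] (D : Finset α) (x : α) :
    signIndicator D x * signIndicator D x = 1 := by
  unfold signIndicator; split_ifs <;> norm_num

theorem sum_signIndicator_mul_signIndicator_symm {α : Type*} [Fintype α] [DecidableEq α]
    (D : Finset α) (f : α ≃ α) :
    ∑ x, signIndicator D x * signIndicator D (f.symm x)
      = Fintype.card α - 4 * #D + 4 * #(D.image f ∩ D) := by
  have hmem (x : α) : x ∈ D.image f ↔ f.symm x ∈ D := by simp [← f.eq_symm_apply]
  have hpt : ∀ x, signIndicator D x * signIndicator D (f.symm x)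
      = 1 - 2 * (if x ∈ D then 1 else 0) - 2 * (if f.symm x ∈ D then 1 else 0)
        + 4 * (if x ∈ D.image f ∩ D then 1 else 0) := by
    intro x
    simp only [signIndicator, mem_inter, hmem]
    split_ifs <;> simp_all <;> norm_num
  simp only [hpt, sum_add_distrib, sum_sub_distrib, ← mul_sum, Equiv.sum_comp f.symm
    (fun y => if y ∈ D then (1 : ℚ) else 0), sum_boole, filter_mem_eq_inter, univ_inter,
    sum_const, card_univ, nsmul_eq_mul, mul_one]
  ring

theorem Finset.card_inter_pair_eq_one_iff {α : Type*} [DecidableEq α] {S : Finset α} {x y : α}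
    (hxy : x ≠ y) : #(S ∩ {x, y}) = 1 ↔ (y ∈ S ↔ x ∉ S) := by
  by_cases hx : x ∈ S <;> by_cases hy : y ∈ S <;>
    simp [inter_insert_of_mem, inter_insert_of_notMem, hx, hy, hxy]

/-- The orthogonal projection onto the functions `f` with `f (u * x) = - f x`. -/
def oddProjection {G : Type*} [Group G] [DecidableEq G] (u : G) : Matrix G G ℚ :=
  (2⁻¹ : ℚ) • (1 - (Equiv.mulLeft u).toPEquiv.toMatrix)

section oddProjection

variable {G : Type*} [Group G] [DecidableEq G] {u : G}

theorem toMatrix_mulLeft_mul_self {R : Type*} [NonAssocSemiring R] [Fintype G]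
    (huu : u * u = 1) :
    (Equiv.mulLeft u).toPEquiv.toMatrix * (Equiv.mulLeft u).toPEquiv.toMatrix
      = (1 : Matrix G G R) := by
  have : (Equiv.mulLeft u).trans (Equiv.mulLeft u) = Equiv.refl G := by
    ext x; simp [← mul_assoc, huu]
  rw [← PEquiv.toMatrix_trans, ← Equiv.toPEquiv_trans, this, Equiv.toPEquiv_refl,
    PEquiv.toMatrix_refl]

theorem oddProjection_mul_self [Fintype G] (huu : u * u = 1) :
    oddProjection u * oddProjection u = oddProjection u := by
  simp only [oddProjection, smul_mul_assoc, mul_smul_comm, sub_mul, mul_sub, mul_one, one_mul,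
    toMatrix_mulLeft_mul_self huu]
  module

theorem transpose_oddProjection (huu : u * u = 1) : (oddProjection u)ᵀ = oddProjection u := by
  have : (Equiv.mulLeft u).symm = Equiv.mulLeft u := by
    ext x; simp [inv_eq_of_mul_eq_one_right huu]
  rw [oddProjection, Matrix.transpose_smul, Matrix.transpose_sub, Matrix.transpose_one,
    ← PEquiv.toMatrix_symm, ← Equiv.toPEquiv_symm, this]

theorem oddProjection_apply (x y : G) :
    oddProjection u x y = 2⁻¹ * ((if x = y then 1 else 0) - if u * x = y then 1 else 0) := by
  simp [oddProjection, Matrix.one_apply, PEquiv.toMatrix_apply]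

end oddProjection

def signMatrix {G : Type*} [Group G] [DecidableEq G] (D : Finset G) : Matrix G G ℚ :=
  Matrix.of fun x y => signIndicator D (x * y)

namespace IsLeftHadamardGroup

variable {G : Type*} [Group G] [Fintype G] [DecidableEq G] {n : ℕ} {D : Finset G} {u : G}

theorem mul_mem_iff_notMem (h : IsLeftHadamardGroup n D u) (x : G) : x * u ∈ D ↔ x ∉ D := by
  have hpair := h.2.2.2.2.2.2 1 x
  simp only [one_mul, image_id'] at hpair
  exact (card_inter_pair_eq_one_iff (by simpa using h.2.1)).mp hpair

theorem signIndicator_mul (h : IsLeftHadamardGroup n D u) (x : G) :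
    signIndicator D (x * u) = -signIndicator D x := by
  by_cases hx : x ∈ D <;> simp [signIndicator, h.mul_mem_iff_notMem, hx]

theorem inv_eq_self (h : IsLeftHadamardGroup n D u) : u⁻¹ = u :=
  inv_eq_of_mul_eq_one_right h.2.2.1

theorem sum_signIndicator_mul_signIndicator_inv_mul (h : IsLeftHadamardGroup n D u) (a : G) :
    ∑ x, signIndicator D x * signIndicator D (a⁻¹ * x)
      = if a = 1 then (8 * n : ℚ) else if a = u then -(8 * n) else 0 := by
  have hsign := h.signIndicator_mul
  have hinv := h.inv_eq_self
  obtain ⟨hcard, -, -, hcomm, hD, hleft, -⟩ := h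
  split_ifs with ha1 hau
  · simp [ha1, signIndicator_mul_self, hcard]
  · simp [hau, hinv, ← hcomm, hsign, signIndicator_mul_self, hcard]
  · have := sum_signIndicator_mul_signIndicator_symm D (Equiv.mulLeft a)
    simp only [Equiv.coe_mulLeft, Equiv.mulLeft_symm_apply] at this
    rw [this, hleft a ha1 hau, hcard, hD]
    push_cast; ring

theorem signMatrix_mul_transpose (h : IsLeftHadamardGroup n D u) :
    signMatrix D * (signMatrix D)ᵀ = (16 * n : ℚ) • oddProjection u := by
  ext x y
  have hsum : ∑ z, signIndicator D (x * z) * signIndicator D (y * z)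
      = ∑ z, signIndicator D z * signIndicator D ((x * y⁻¹)⁻¹ * z) :=
    Fintype.sum_equiv (Equiv.mulLeft x) _ _ fun z => by simp [mul_assoc]
  have hxy : x * y⁻¹ = u ↔ u * x = y := by
    rw [mul_inv_eq_iff_eq_mul]
    constructor <;> rintro rfl <;> simp [← mul_assoc, h.2.2.1]
  simp only [Matrix.mul_apply, Matrix.transpose_apply, signMatrix, Matrix.of_apply, hsum,
    h.sum_signIndicator_mul_signIndicator_inv_mul, Matrix.smul_apply, oddProjection_apply,
    mul_inv_eq_one, hxy, smul_eq_mul]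
  have hne : u * x ≠ x := by simpa using h.2.1
  split_ifs <;> simp_all <;> ring

theorem signMatrix_mul_oddProjection (h : IsLeftHadamardGroup n D u) :
    signMatrix D * oddProjection u = signMatrix D := by
  have hMP : signMatrix D * (Equiv.mulLeft u).toPEquiv.toMatrix = -signMatrix D := by
    ext x y
    simp [PEquiv.mul_toMatrix_toPEquiv, signMatrix, h.inv_eq_self, ← h.2.2.2.1 y, ← mul_assoc,
      h.signIndicator_mul]
  rw [oddProjection, mul_smul_comm, mul_sub, mul_one, hMP]
  module

theorem oddProjection_mul_signMatrix (h : IsLeftHadamardGroup n D u) :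
    oddProjection u * signMatrix D = signMatrix D := by
  have hPM : (Equiv.mulLeft u).toPEquiv.toMatrix * signMatrix D = -signMatrix D := by
    ext x y
    simp only [PEquiv.toMatrix_toPEquiv_mul, Matrix.submatrix_apply, signMatrix, Matrix.of_apply,
      Matrix.neg_apply, Equiv.coe_mulLeft, id]
    rw [mul_assoc, ← h.2.2.2.1, h.signIndicator_mul]
  rw [oddProjection, smul_mul_assoc, sub_mul, one_mul, hPM]
  module

theorem transpose_signMatrix_mul_self (h : IsLeftHadamardGroup n D u) :
    (signMatrix D)ᵀ * signMatrix D = (16 * n : ℚ) • oddProjection u := by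
  have hn : (16 * n : ℚ) ≠ 0 := by
    have : 0 < n := by have := h.1 ▸ Fintype.card_pos (α := G); omega
    positivity
  exact transpose_mul_self_eq_of_mul_transpose_self_eq hn (oddProjection_mul_self h.2.2.1)
    (transpose_oddProjection h.2.2.1) h.signMatrix_mul_oddProjection
    h.oddProjection_mul_signMatrix h.signMatrix_mul_transpose

theorem sum_signIndicator_mul_signIndicator_mul_inv (h : IsLeftHadamardGroup n D u) {a : G}
    (ha1 : a ≠ 1) (hau : a ≠ u) :
    ∑ x, signIndicator D x * signIndicator D (x * a⁻¹) = 0 := by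
  have hua : u ≠ a⁻¹ := fun hua => hau (by rw [← h.inv_eq_self, hua, inv_inv])
  have := congrFun (congrFun h.transpose_signMatrix_mul_self 1) a⁻¹
  simpa [Matrix.mul_apply, signMatrix, oddProjection_apply, eq_comm, ha1, hua] using this

theorem card_image_mul_right_inter (h : IsLeftHadamardGroup n D u) {a : G} (ha1 : a ≠ 1)
    (hau : a ≠ u) : #(D.image (· * a) ∩ D) = 2 * n := by
  have hcount := sum_signIndicator_mul_signIndicator_symm D (Equiv.mulRight a)
  rw [Equiv.coe_mulRight, Equiv.mulRight_symm_apply,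
    h.sum_signIndicator_mul_signIndicator_mul_inv ha1 hau, h.1, h.2.2.2.2.1] at hcount
  have : (#(D.image (· * a) ∩ D) : ℚ) = 2 * n := by push_cast at hcount; linarith
  exact_mod_cast this

theorem card_image_mul_right_inter_pair (h : IsLeftHadamardGroup n D u) (a b : G) :
    #(D.image (· * a) ∩ {b, b * u}) = 1 := by
  have hmem (x : G) : x ∈ D.image (· * a) ↔ x * a⁻¹ ∈ D := by simp
  rw [card_inter_pair_eq_one_iff (by simpa using h.2.1), hmem, hmem, mul_assoc,
    ← h.2.2.2.1, ← mul_assoc, h.mul_mem_iff_notMem]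

end IsLeftHadamardGroup

theorem Finset.image_op_image_mul_left {G : Type*} [Group G] [DecidableEq G] (D : Finset G)
    (a : Gᵐᵒᵖ) :
    (D.image MulOpposite.op).image (a * ·) = (D.image (· * a.unop)).image MulOpposite.op := by
  simp only [image_image]
  rfl

/-- If `(G, D, u)` is a left Hadamard group then `(Gᵒᵖ, D, u)` is a left Hadamard group. -/
theorem stmt_8 {G : Type*} [Group G] [Fintype G] [DecidableEq G]
    (n : ℕ) (D : Finset G) (u : G)
    (h : IsLeftHadamardGroup n D u) :
    IsLeftHadamardGroup n (D.image (MulOpposite.op : G → Gᵐᵒᵖ)) (MulOpposite.op u) := by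
  have ⟨hcard, hu1, huu, hcomm, hD, _⟩ := h
  have hop := MulOpposite.op_injective (α := G)
  refine ⟨?_, by simpa using hu1, by rw [← MulOpposite.op_mul, huu, MulOpposite.op_one],
    fun g => congrArg MulOpposite.op (hcomm g.unop).symm,
    by rw [card_image_of_injective _ hop, hD], fun a ha1 hau => ?_, fun a b => ?_⟩
  · rwa [Fintype.card_congr MulOpposite.opEquiv.symm]
  · rw [image_op_image_mul_left, ← image_inter _ _ hop, card_image_of_injective _ hop]
    exact h.card_image_mul_right_inter (by simpa using ha1)
      (by rwa [Ne, ← MulOpposite.op_inj, MulOpposite.op_unop])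
  · have hpair : ({b, b * MulOpposite.op u} : Finset Gᵐᵒᵖ)
        = ({b.unop, b.unop * u} : Finset G).image MulOpposite.op := by
      simp [hcomm]
    rw [image_op_image_mul_left, hpair, ← image_inter _ _ hop, card_image_of_injective _ hop]
    exact h.card_image_mul_right_inter_pair _ _
end

section
/- Let (C, ·) be a propelinear code of length 4n that is also an Hadamard code. Then (C, ·) is a group of order 8n which is not cyclic. -/
/-- The action of a coordinate permutation `σ` on a binary vector:
`(permAct σ v) i = v (σ⁻¹ i)`. -/
def permAct {m : ℕ} (σ : Equiv.Perm (Fin m)) (v : Fin m → ZMod 2) : Fin m → ZMod 2 :=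
  fun i => v (σ.symm i)

/-- The propelinear operation `x · y = x + π_x(y)`. -/
def pmul {m : ℕ} (π : (Fin m → ZMod 2) → Equiv.Perm (Fin m))
    (x y : Fin m → ZMod 2) : Fin m → ZMod 2 :=
  x + permAct (π x) y

/-- Powers with respect to the propelinear operation. -/
def ppow {m : ℕ} (π : (Fin m → ZMod 2) → Equiv.Perm (Fin m))
    (g : Fin m → ZMod 2) : ℕ → Fin m → ZMod 2
  | 0 => 0
  | k + 1 => pmul π g (ppow π g k)

/-- The all-ones vector. -/
def allOnes (m : ℕ) : Fin m → ZMod 2 := fun _ => 1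

/-!
Suppose `g` generates `(C, ·)`, and write `τ = π_g`, `S k = g^k = g + τ g + ⋯ + τ^{k-1} g`.
Then `g` has order `8n`, the all-ones word (an involution) is `S (4n)`, and every other `S k`
has weight `2n`. Let `ω` be a primitive `8n`-th root of unity and
`F i = ∑_{k < 8n} (-1)^{S k i} ω^k`. Summing over `i` gives `∑ F = 8n ≠ 0`, while
`S (k+1) (τ i) = g (τ i) + S k i` gives `F (τ i) = ± ω F i`. On the support of `F`, which is
`τ`-invariant, this forces `ω^{2|supp F|} = 1`, so the support is all `4n` coordinates and then
`ω^{4n} = (-1)^{wt g} = 1`, contradicting `ω^{4n} = -1`.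
-/

open Finset Function

section PermAct

variable {m : ℕ}

@[simp]
lemma permAct_apply_perm (σ : Equiv.Perm (Fin m)) (v : Fin m → ZMod 2) (i : Fin m) :
    permAct σ v (σ i) = v i := by
  simp [permAct]

lemma permAct_add (σ : Equiv.Perm (Fin m)) (v w : Fin m → ZMod 2) :
    permAct σ (v + w) = permAct σ v + permAct σ w := rfl

lemma permAct_one (v : Fin m → ZMod 2) : permAct 1 v = v := rfl

lemma permAct_mul (σ ρ : Equiv.Perm (Fin m)) (v : Fin m → ZMod 2) :
    permAct (σ * ρ) v = permAct σ (permAct ρ v) := rfl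

@[simp]
lemma permAct_zero (σ : Equiv.Perm (Fin m)) : permAct σ 0 = 0 := rfl

@[simp]
lemma permAct_allOnes (σ : Equiv.Perm (Fin m)) : permAct σ (allOnes m) = allOnes m := rfl

lemma permAct_injective (σ : Equiv.Perm (Fin m)) : Injective (permAct σ) :=
  fun v w h => funext fun i => by simpa using congrFun h (σ i)

end PermAct

section Powers

variable {m : ℕ} (π : (Fin m → ZMod 2) → Equiv.Perm (Fin m)) (g : Fin m → ZMod 2)

@[simp]
lemma ppow_zero : ppow π g 0 = 0 := rfl

lemma ppow_succ (k : ℕ) : ppow π g (k + 1) = g + permAct (π g) (ppow π g k) := rfl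

lemma ppow_succ_apply (k : ℕ) (i : Fin m) :
    ppow π g (k + 1) (π g i) = g (π g i) + ppow π g k i := by
  simp [ppow_succ]

lemma ppow_add_eq_add_permAct (a b : ℕ) :
    ppow π g (a + b) = ppow π g a + permAct (π g ^ a) (ppow π g b) := by
  induction a with
  | zero => simp [permAct_one]
  | succ a ih =>
    rw [Nat.add_right_comm, ppow_succ, ih, ppow_succ, permAct_add, pow_succ', permAct_mul,
      add_assoc]

lemma ppow_eq_iterate (k : ℕ) : ppow π g k = (pmul π g)^[k] 0 := by
  induction k with
  | zero => rfl
  | succ k ih => rw [iterate_succ_apply', ← ih]; rfl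

lemma pmul_injective : Injective (pmul π g) :=
  fun _ _ h => permAct_injective _ (add_left_cancel h)

lemma ppow_mem {C : Finset (Fin m → ZMod 2)} (h0 : 0 ∈ C)
    (hclosed : ∀ x ∈ C, ∀ y ∈ C, pmul π x y ∈ C) (hg : g ∈ C) (k : ℕ) :
    ppow π g k ∈ C := by
  induction k with
  | zero => exact h0
  | succ k ih => exact hclosed g hg _ ih

end Powers

lemma minimalPeriod_eq_card_of_orbit {α : Type*} {f : α → α} {x : α}
    (hx : x ∈ periodicPts f) {s : Finset α} (hmaps : ∀ k, f^[k] x ∈ s)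
    (hsurj : ∀ y ∈ s, ∃ k, f^[k] x = y) :
    minimalPeriod f x = s.card := by
  classical
  have himage : (range (minimalPeriod f x)).image (f^[·] x) = s := by
    ext y
    simp only [mem_image, mem_range]
    refine ⟨fun ⟨k, _, hk⟩ => hk ▸ hmaps k, fun hy => ?_⟩
    obtain ⟨k, rfl⟩ := hsurj y hy
    exact ⟨k % minimalPeriod f x, Nat.mod_lt _ (minimalPeriod_pos_of_mem_periodicPts hx),
      iterate_mod_minimalPeriod_eq⟩
  rw [← himage, card_image_of_injOn (by simpa using iterate_injOn_Iio_minimalPeriod), card_range]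

/-- The order of `g` for the propelinear operation, `ppow π g k` being `(pmul π g)^[k] 0`. -/
noncomputable def porderOf {m : ℕ} (π : (Fin m → ZMod 2) → Equiv.Perm (Fin m))
    (g : Fin m → ZMod 2) : ℕ :=
  minimalPeriod (pmul π g) 0

section Order

variable {m : ℕ} (π : (Fin m → ZMod 2) → Equiv.Perm (Fin m)) (g : Fin m → ZMod 2)

lemma porderOf_pos : 0 < porderOf π g :=
  minimalPeriod_pos_of_mem_periodicPts ((pmul_injective π g).mem_periodicPts 0)

@[simp]
lemma ppow_porderOf : ppow π g (porderOf π g) = 0 := by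
  rw [ppow_eq_iterate]; exact iterate_minimalPeriod

lemma ppow_mod_porderOf (k : ℕ) : ppow π g (k % porderOf π g) = ppow π g k := by
  simp only [ppow_eq_iterate]; exact iterate_mod_minimalPeriod_eq

lemma porderOf_dvd_of_ppow_eq_zero {k : ℕ} (hk : ppow π g k = 0) : porderOf π g ∣ k :=
  IsPeriodicPt.minimalPeriod_dvd ((ppow_eq_iterate π g k).symm.trans hk)

lemma ppow_injOn : Set.InjOn (ppow π g) (Set.Iio (porderOf π g)) :=
  fun _ ha _ hb h =>
    iterate_injOn_Iio_minimalPeriod ha hb (by simpa only [ppow_eq_iterate] using h)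

lemma porderOf_eq_card {C : Finset (Fin m → ZMod 2)} (h0 : 0 ∈ C)
    (hclosed : ∀ x ∈ C, ∀ y ∈ C, pmul π x y ∈ C) (hg : g ∈ C)
    (hgen : ∀ x ∈ C, ∃ k, ppow π g k = x) : porderOf π g = C.card :=
  minimalPeriod_eq_card_of_orbit ((pmul_injective π g).mem_periodicPts 0)
    (fun k => ppow_eq_iterate π g k ▸ ppow_mem π g h0 hclosed hg k)
    (fun y hy => by simpa only [ppow_eq_iterate] using hgen y hy)

/-- `allOnes` squares to `0`, so in a cyclic group it is the power of half the order. -/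
lemma ppow_porderOf_div_two (hm : 0 < m) {t : ℕ} (ht : ppow π g t = allOnes m) :
    ppow π g (porderOf π g / 2) = allOnes m := by
  set t' := t % porderOf π g
  have ht' : ppow π g t' = allOnes m := (ppow_mod_porderOf π g t).trans ht
  have ht'0 : t' ≠ 0 := fun h => by
    have := congrFun ht' ⟨0, hm⟩
    simp [h, allOnes] at this
  have hdvd : porderOf π g ∣ t' + t' := porderOf_dvd_of_ppow_eq_zero π g <| by
    rw [ppow_add_eq_add_permAct, ht', permAct_allOnes]
    funext i
    simp [allOnes]
    decide
  have := Nat.eq_of_dvd_of_lt_two_mul (by omega) hdvd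
    (by have := Nat.mod_lt t (porderOf_pos π g); omega)
  rwa [← this, ← two_mul, Nat.mul_div_cancel_left _ two_pos]

end Order

lemma IsPrimitiveRoot.pow_eq_neg_one {R : Type*} [CommRing R] [NoZeroDivisors R] {ζ : R} {k : ℕ}
    (hζ : IsPrimitiveRoot ζ (2 * k)) (hk : k ≠ 0) : ζ ^ k = -1 :=
  IsPrimitiveRoot.eq_neg_one_of_two_right <| by
    simpa [Nat.mul_div_cancel _ (Nat.pos_of_ne_zero hk)] using hζ.pow_of_dvd hk (dvd_mul_left k 2)

def chi (x : ZMod 2) : ℂ := if x = 0 then 1 else -1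

@[simp]
lemma chi_zero : chi 0 = 1 := if_pos rfl

lemma chi_add (a b : ZMod 2) : chi (a + b) = chi a * chi b := by
  obtain rfl | rfl : a = 0 ∨ a = 1 := (by revert a; decide) <;>
  obtain rfl | rfl : b = 0 ∨ b = 1 := (by revert b; decide) <;>
  simp [chi, show (1 + 1 : ZMod 2) = 0 from rfl]

lemma chi_sq (a : ZMod 2) : chi a ^ 2 = 1 := by
  unfold chi; split_ifs <;> norm_num

lemma sum_chi {m : ℕ} (v : Fin m → ZMod 2) : ∑ i, chi (v i) = m - 2 * hammingNorm v := by
  have hcard : #{i | v i = 0} + hammingNorm v = m := by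
    simpa [hammingNorm] using card_filter_add_card_filter_not (s := univ) (fun i => v i = 0)
  rw [show (m : ℂ) = #{i | v i = 0} + hammingNorm v by exact_mod_cast hcard.symm]
  simp only [chi, sum_ite, sum_const, nsmul_eq_mul, mul_one, mul_neg, hammingNorm]
  ring

lemma prod_chi {m : ℕ} (v : Fin m → ZMod 2) : ∏ i, chi (v i) = (-1) ^ hammingNorm v := by
  simp [chi, prod_ite, prod_const, hammingNorm]

def chiTransform {m : ℕ} (S : ℕ → Fin m → ZMod 2) (ω : ℂ) (N : ℕ) (i : Fin m) : ℂ :=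
  ∑ k ∈ range N, chi (S k i) * ω ^ k

lemma sum_chiTransform {m : ℕ} (S : ℕ → Fin m → ZMod 2) (ω : ℂ) (N : ℕ) :
    ∑ i, chiTransform S ω N i = ∑ k ∈ range N, (m - 2 * hammingNorm (S k)) * ω ^ k := by
  simp only [chiTransform]
  rw [sum_comm]
  simp only [← sum_mul, sum_chi]

lemma sum_range_succ_eq_of_eq {M : Type*} [AddCancelCommMonoid M] (f : ℕ → M) {N : ℕ}
    (h : f N = f 0) : ∑ k ∈ range N, f (k + 1) = ∑ k ∈ range N, f k :=
  add_right_cancel (b := f 0) <| by rw [← sum_range_succ', sum_range_succ, h]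

lemma chiTransform_ppow_apply_perm {m : ℕ} (π : (Fin m → ZMod 2) → Equiv.Perm (Fin m))
    (g : Fin m → ZMod 2) {ω : ℂ} {N : ℕ} (hN : ppow π g N = 0) (hω : ω ^ N = 1)
    (i : Fin m) :
    chiTransform (ppow π g) ω N (π g i) =
      chi (g (π g i)) * ω * chiTransform (ppow π g) ω N i := by
  unfold chiTransform
  rw [← sum_range_succ_eq_of_eq (fun k => chi (ppow π g k (π g i)) * ω ^ k)
    (by simp [hN, hω]), mul_sum]
  refine sum_congr rfl fun k _ => ?_
  rw [ppow_succ_apply, chi_add, pow_succ]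
  ring

lemma sum_chiTransform_eq_of_hadamard {n : ℕ} (hn : 0 < n) {S : ℕ → Fin (4 * n) → ZMod 2}
    {ω : ℂ} (hω : ω ^ (4 * n) = -1) (hS0 : S 0 = 0) (hhalf : S (4 * n) = allOnes (4 * n))
    (hweight : ∀ k < 8 * n, k ≠ 0 → k ≠ 4 * n → hammingNorm (S k) = 2 * n) :
    ∑ i, chiTransform S ω (8 * n) i = 8 * n := by
  rw [sum_chiTransform, sum_eq_add 0 (4 * n) (by omega) ?_
    (fun h => (h (mem_range.2 (by omega))).elim) (fun h => (h (mem_range.2 (by omega))).elim)]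
  · simp [hS0, hhalf, hω, hammingNorm, allOnes]
    ring
  · intro k hk ⟨hk0, hk4⟩
    rw [hweight k (mem_range.1 hk) hk0 hk4]
    push_cast
    ring

lemma eq_zero_of_apply_perm_eq_mul {ι : Type*} [Fintype ι] (τ : Equiv.Perm ι)
    {F ε : ι → ℂ} {ω : ℂ} (hω : IsPrimitiveRoot ω (2 * Fintype.card ι))
    (hε : ∀ i, ε i ^ 2 = 1) (hprod : ∏ i, ε i = 1) (hF : ∀ i, F (τ i) = ε i * ω * F i) :
    F = 0 := by
  classical
  by_contra hne
  obtain ⟨i₀, hi₀⟩ : ∃ i, F i ≠ 0 := by simpa [funext_iff] using hne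
  have hcard : 0 < Fintype.card ι := Fintype.card_pos_iff.2 ⟨i₀⟩
  have hω0 : ω ≠ 0 := hω.ne_zero (by omega)
  -- The support `O` of `F` is `τ`-invariant; comparing `∏_O F ∘ τ` with `∏_O F` gives
  -- `ω^{2|O|} = 1`, so `O` is everything.
  set O := univ.filter fun i => F i ≠ 0
  have hmemO : ∀ i, i ∈ O ↔ τ i ∈ O := fun i => by
    have hεi : ε i ≠ 0 := fun h => by simpa [h] using hε i
    simp [O, hF, hεi, hω0]
  have hOprod : (∏ i ∈ O, ε i) * ω ^ O.card = 1 := by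
    have hshift : ∏ i ∈ O, F (τ i) = ∏ i ∈ O, F i := prod_equiv τ hmemO fun _ _ => rfl
    simp only [hF, prod_mul_distrib, prod_const] at hshift
    exact mul_right_cancel₀ (prod_ne_zero_iff.2 fun i hi => (mem_filter.1 hi).2)
      (hshift.trans (one_mul _).symm)
  have hdvd : Fintype.card ι ∣ O.card := by
    refine Nat.dvd_of_mul_dvd_mul_left two_pos (hω.dvd_of_pow_eq_one _ ?_)
    calc ω ^ (2 * #O) = ((∏ i ∈ O, ε i) * ω ^ #O) ^ 2 := by
          rw [mul_pow, ← prod_pow, prod_eq_one fun i _ => hε i, one_mul, pow_mul']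
      _ = 1 := by rw [hOprod, one_pow]
  have hOuniv : O = univ := eq_univ_of_card O <| le_antisymm (card_le_univ O)
    (Nat.le_of_dvd (card_pos.2 ⟨i₀, by simpa [O] using hi₀⟩) hdvd)
  rw [hOuniv, hprod, one_mul, card_univ] at hOprod
  exact hω.pow_ne_one_of_pos_of_lt hcard.ne' (by omega) hOprod

theorem stmt_14_general (n : ℕ) (C : Finset (Fin (4*n) → ZMod 2))
    (π : (Fin (4*n) → ZMod 2) → Equiv.Perm (Fin (4*n)))
    (h0 : (0 : Fin (4*n) → ZMod 2) ∈ C) (hu : allOnes (4*n) ∈ C)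
    (hcard : C.card = 8*n)
    (hclosed : ∀ x ∈ C, ∀ y ∈ C, pmul π x y ∈ C)
    (hdist : ∀ x ∈ C, ∀ y ∈ C, x ≠ y → x ≠ y + allOnes (4*n) → hammingDist x y = 2*n) :
    C.card = 8*n ∧ ¬ ∃ g ∈ C, ∀ x ∈ C, ∃ m : ℕ, ppow π g m = x := by
  refine ⟨hcard, fun ⟨g, hg, hgen⟩ => ?_⟩
  have hn : 0 < n := by have := card_pos.2 ⟨_, h0⟩; omega
  have hord : porderOf π g = 8 * n := (porderOf_eq_card π g h0 hclosed hg hgen).trans hcard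
  have hhalf : ppow π g (4 * n) = allOnes (4 * n) := by
    obtain ⟨t, ht⟩ := hgen _ hu
    simpa [hord, show 8 * n / 2 = 4 * n by omega] using ppow_porderOf_div_two π g (by omega) ht
  have hweight : ∀ k < 8 * n, k ≠ 0 → k ≠ 4 * n → hammingNorm (ppow π g k) = 2 * n := by
    intro k hk hk0 hk4
    have hinj := hord ▸ ppow_injOn π g
    simpa using hdist _ (ppow_mem π g h0 hclosed hg k) 0 h0
      (fun h => hk0 (hinj hk (by simp; omega) (h.trans (ppow_zero π g).symm)))
      (fun h => hk4 (hinj hk (by simp; omega) ((h.trans (zero_add _)).trans hhalf.symm)))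
  have hg_weight : hammingNorm g = 2 * n := by
    simpa [ppow_succ] using hweight 1 (by omega) one_ne_zero (by omega)
  obtain ⟨ω, hω⟩ : ∃ ω : ℂ, IsPrimitiveRoot ω (2 * (4 * n)) :=
    ⟨_, Complex.isPrimitiveRoot_exp _ (by omega)⟩
  have hF := eq_zero_of_apply_perm_eq_mul (π g) (F := chiTransform (ppow π g) ω (8 * n))
    (ε := fun i => chi (g (π g i))) (by simpa using hω) (fun _ => chi_sq _)
    (by rw [Equiv.prod_comp (π g) (fun i => chi (g i)), prod_chi, hg_weight, pow_mul]; norm_num)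
    (chiTransform_ppow_apply_perm π g (hord ▸ ppow_porderOf π g)
      (by simpa [← mul_assoc] using hω.pow_eq_one))
  have hsum := sum_chiTransform_eq_of_hadamard hn (hω.pow_eq_neg_one (by omega)) (ppow_zero π g)
    hhalf hweight
  simp [hF] at hsum
  omega

/-- A propelinear code of length `4n` which is also an Hadamard code is a group of
order `8n` which is not cyclic (no element generates all of `C` by taking powers). -/
theorem stmt_14 (n : ℕ) (hn : 0 < n) (C : Finset (Fin (4*n) → ZMod 2))
    (π : (Fin (4*n) → ZMod 2) → Equiv.Perm (Fin (4*n)))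
    (h0 : (0 : Fin (4*n) → ZMod 2) ∈ C) (hu : allOnes (4*n) ∈ C)
    (hcard : C.card = 8*n)
    (hclosed : ∀ x ∈ C, ∀ y ∈ C, pmul π x y ∈ C)
    (hhom : ∀ x ∈ C, ∀ y ∈ C, π (pmul π x y) = π x * π y)
    (hdist : ∀ x ∈ C, ∀ y ∈ C, x ≠ y → x ≠ y + allOnes (4*n) → hammingDist x y = 2*n) :
    C.card = 8*n ∧ ¬ ∃ g ∈ C, ∀ x ∈ C, ∃ m : ℕ, ppow π g m = x :=
  stmt_14_general n C π h0 hu hcard hclosed hdist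
end
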